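/- Let R be a commutative ring with 2 invertible and 1 ≤ k ≤ n. The kernel L_k of the block-projection homomorphism ρ : T_k → O_{n−k,n−k}(R) fits into a central extension of groups 1 → (R^{k(k−1)/2}, +) → L_k → ((R^{2(n−k)})^k, +) → 1, where the quotient map sends an element of L_k to its tuple of column vectors (x₁, …, x_k) ∈ (R^{2(n−k)})^k, and the kernel of this quotient map is the abelian group of matrices in L_k with all xᵢ = 0, which is isomorphic to (R^{k(k−1)/2}, +) via the strictly-upper-triangular coordinates cⱼⁱ (i < j). -/

import Mathlib

open Matrix Function

def psi (n : ℕ) (R : Type*) [CommRing R] : Matrix (Fin (2*n)) (Fin (2*n)) R :=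
  Matrix.of fun i j => if i.val / 2 = j.val / 2 ∧ i.val ≠ j.val then 1 else 0

def form (n : ℕ) {R : Type*} [CommRing R] (u v : Fin (2*n) → R) : R :=
  u ⬝ᵥ (psi n R) *ᵥ v

def Onn (n : ℕ) (R : Type*) [CommRing R] : Subgroup (GL (Fin (2*n)) R) where
  carrier := {A | (↑A : Matrix (Fin (2*n)) (Fin (2*n)) R)ᵀ * psi n R * ↑A = psi n R}
  one_mem' := by simp
  mul_mem' := by
    intro a b ha hb
    simp only [Set.mem_setOf_eq, Units.val_mul, Matrix.transpose_mul] at *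
    calc (↑b : Matrix _ _ R)ᵀ * (↑a : Matrix _ _ R)ᵀ * psi n R * (↑a * ↑b)
        = (↑b : Matrix _ _ R)ᵀ * (((↑a : Matrix _ _ R)ᵀ * psi n R * ↑a) * ↑b) := by
          simp only [Matrix.mul_assoc]
      _ = psi n R := by rw [ha, ← Matrix.mul_assoc, hb]
  inv_mem' := by
    intro a ha
    simp only [Set.mem_setOf_eq] at *
    set A : Matrix (Fin (2*n)) (Fin (2*n)) R := ↑a with hA
    set B : Matrix (Fin (2*n)) (Fin (2*n)) R := ↑(a⁻¹) with hB
    have hAB : A * B = 1 := by rw [hA, hB]; exact a.mul_inv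
    have key : Bᵀ * (Aᵀ * psi n R * A) * B
        = (A * B)ᵀ * psi n R * (A * B) := by
      rw [Matrix.transpose_mul]
      simp only [Matrix.mul_assoc]
    conv_lhs => rw [← ha]
    rw [key, hAB]
    simp

def eVec (n : ℕ) (R : Type*) [CommRing R] (i : Fin n) : Fin (2*n) → R :=
  Pi.single ⟨2*i.val, by have := i.isLt; omega⟩ 1

def fVec (n : ℕ) (R : Type*) [CommRing R] (i : Fin n) : Fin (2*n) → R :=
  Pi.single ⟨2*i.val+1, by have := i.isLt; omega⟩ 1

def IsUnimodular (R : Type*) [CommRing R] {M : Type*} [AddCommGroup M] [Module R M]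
    (m : ℕ) {q : ℕ} (v : Fin q → M) : Prop :=
  ∀ s : Finset (Fin q), s.card ≤ min m q →
    ∃ N : Submodule R M, IsCompl (Submodule.span R (v '' ↑s)) N ∧
      Module.Free R (Submodule.span R (v '' ↑s)) ∧
      Module.finrank R (Submodule.span R (v '' ↑s)) = s.card

def IsTotallyIsotropic (n : ℕ) {R : Type*} [CommRing R] {q : ℕ}
    (v : Fin q → (Fin (2*n) → R)) : Prop :=
  ∀ i j, form n (v i) (v j) = 0

def IU (n : ℕ) (R : Type*) [CommRing R] (k : ℕ) :=
  {v : Fin k → Fin (2*n) → R // IsTotallyIsotropic n v ∧ IsUnimodular R (2*n) v}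

def stabOf (n : ℕ) (R : Type*) [CommRing R] (S : Set (Fin (2*n) → R)) :
    Subgroup (GL (Fin (2*n)) R) where
  carrier := {A | ∀ v ∈ S, (↑A : Matrix (Fin (2*n)) (Fin (2*n)) R) *ᵥ v = v}
  one_mem' := by intro v hv; simp
  mul_mem' := by
    intro a b ha hb v hv
    show (↑(a*b) : Matrix (Fin (2*n)) (Fin (2*n)) R) *ᵥ v = v
    rw [Units.val_mul, ← Matrix.mulVec_mulVec, hb v hv, ha v hv]
  inv_mem' := by
    intro a ha v hv
    show (↑(a⁻¹) : Matrix (Fin (2*n)) (Fin (2*n)) R) *ᵥ v = v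
    conv_lhs => rw [← ha v hv]
    rw [Matrix.mulVec_mulVec]
    have : (↑(a⁻¹) : Matrix (Fin (2*n)) (Fin (2*n)) R) * (↑a : Matrix (Fin (2*n)) (Fin (2*n)) R) = 1 := a.inv_mul
    rw [this, Matrix.one_mulVec]

def Dmat (n k : ℕ) {R : Type*} [CommRing R] (a : Rˣ) :
    Matrix (Fin (2*n)) (Fin (2*n)) R :=
  Matrix.diagonal (fun i =>
    if i.val < 2*k then (if i.val % 2 = 0 then (a : R) else ((a⁻¹ : Rˣ) : R)) else 1)

def Bmat (n : ℕ) {R : Type*} [CommRing R] (c : R) :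
    Matrix (Fin (2*n)) (Fin (2*n)) R :=
  Matrix.diagonal (fun i => if i.val % 2 = 0 then 1 else c)

/-!
Write an element of `L_k` as `1 + N` in the basis `e₁, f₁, …, eₙ, fₙ`. Fixing the `eᵢ`,
orthogonality and `ρ = 1` force `N` to vanish on the `eᵢ`-columns, on the `fᵢ`-rows and on the
block of `⟨e_{k+1}, …, fₙ⟩`. Hence in `(1 + N)(1 + N')` the cross term `N N'` only lives in the
`cⱼⁱ`-block, so the `xᵢ` are additive. If all `xᵢ = 0`, the rows of `N` at `e_{k+1}, …, fₙ`
vanish, and by `A⁻¹ = ψ Aᵀ ψ` so do its columns there: `N` lives in the `cⱼⁱ`-block alone, so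
these elements are central and their `cⱼⁱ` are additive. Orthogonality makes that block skew, and
since `2` is invertible it is determined by the `cⱼⁱ` with `i < j`. Both coordinate maps are onto
because the Eichler transformations `1 + r (E_{ab} - E_{b'a'})` (`'` the hyperbolic partner) lie
in `L_k` for suitable `a`, `b`.
-/

open Multiplicative

section PiSingle

variable {ι κ M : Type*} [Fintype ι] [DecidableEq ι] [Fintype κ] [DecidableEq κ]
  [AddCommMonoid M]

lemma ofAdd_eq_prod_ofAdd_single (f : ι → M) :
    ofAdd f = ∏ i, ofAdd (Pi.single i (f i)) := by
  rw [← ofAdd_sum, Finset.univ_sum_single]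

lemma ofAdd_eq_prod_prod_ofAdd_single (f : ι → κ → M) :
    ofAdd f = ∏ i, ∏ j, ofAdd (Pi.single i (Pi.single j (f i j))) := by
  simp_rw [← ofAdd_sum]
  congr 1
  ext i j
  simp [Finset.sum_apply, Pi.single_apply, ite_apply]

end PiSingle

section Partner

variable {n k : ℕ}

def partner (p : Fin (2*n)) : Fin (2*n) :=
  ⟨if p.val % 2 = 0 then p.val + 1 else p.val - 1, by have := p.isLt; split <;> omega⟩

lemma partner_val (p : Fin (2*n)) :
    (partner p).val = if p.val % 2 = 0 then p.val + 1 else p.val - 1 := rfl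

@[simp]
lemma partner_partner (p : Fin (2*n)) : partner (partner p) = p := by
  apply Fin.ext; rw [partner_val, partner_val]; split_ifs <;> omega

lemma eq_partner_iff {p q : Fin (2*n)} : p = partner q ↔ partner p = q := by
  constructor <;> (rintro rfl; rw [partner_partner])

lemma partner_injective : Injective (partner : Fin (2*n) → Fin (2*n)) :=
  fun p q h => by rw [← partner_partner p, h, partner_partner]

lemma partner_ne_self (p : Fin (2*n)) : partner p ≠ p := by
  rw [Ne, Fin.ext_iff, partner_val]; split_ifs <;> omega

lemma partner_val_of_even {p : Fin (2*n)} (h : p.val % 2 = 0) : (partner p).val = p.val + 1 := by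
  rw [partner_val, if_pos h]

lemma partner_val_of_odd {p : Fin (2*n)} (h : p.val % 2 = 1) : (partner p).val = p.val - 1 := by
  rw [partner_val, if_neg (by omega)]

lemma le_partner_val_iff {p : Fin (2*n)} : 2*k ≤ (partner p).val ↔ 2*k ≤ p.val := by
  rw [partner_val]; split_ifs <;> omega

end Partner

section Psi

variable {n : ℕ} {R : Type*} [CommRing R]

lemma psi_apply (p q : Fin (2*n)) : psi n R p q = if q = partner p then 1 else 0 := by
  refine if_congr ?_ rfl rfl
  rw [Fin.ext_iff, partner_val]
  split_ifs <;> omega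

lemma psi_mul_apply (M : Matrix (Fin (2*n)) (Fin (2*n)) R) (p q : Fin (2*n)) :
    (psi n R * M) p q = M (partner p) q := by
  simp [Matrix.mul_apply, psi_apply, ite_mul]

lemma mul_psi_apply (M : Matrix (Fin (2*n)) (Fin (2*n)) R) (p q : Fin (2*n)) :
    (M * psi n R) p q = M p (partner q) := by
  rw [Matrix.mul_apply]
  simp_rw [psi_apply, mul_ite, mul_one, mul_zero, eq_partner_iff]
  simp

lemma psi_mul_psi : psi n R * psi n R = 1 := by
  ext p q
  rw [psi_mul_apply, psi_apply, partner_partner, Matrix.one_apply]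
  exact if_congr eq_comm rfl rfl

lemma psi_mul_transpose_mul_psi_apply (M : Matrix (Fin (2*n)) (Fin (2*n)) R) (p q : Fin (2*n)) :
    (psi n R * Mᵀ * psi n R) p q = M (partner q) (partner p) := by
  rw [mul_psi_apply, psi_mul_apply, Matrix.transpose_apply]

lemma one_apply_partner (p q : Fin (2*n)) :
    (1 : Matrix (Fin (2*n)) (Fin (2*n)) R) (partner q) (partner p) = (1 : Matrix _ _ R) p q := by
  simp only [Matrix.one_apply, partner_injective.eq_iff, eq_comm]

lemma coe_inv_of_mem_Onn {A : GL (Fin (2*n)) R} (hA : A ∈ Onn n R) :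
    A⁻¹.val = psi n R * A.valᵀ * psi n R := by
  have hO : A.valᵀ * psi n R * A.val = psi n R := hA
  have hleft : psi n R * A.valᵀ * psi n R * A.val = 1 := by
    rw [Matrix.mul_assoc, Matrix.mul_assoc, ← Matrix.mul_assoc A.valᵀ, hO, psi_mul_psi]
  rw [← Matrix.mul_one (psi n R * _ * _), ← A.mul_inv, ← Matrix.mul_assoc, hleft,
    Matrix.one_mul]

lemma apply_partner_eq_one_apply {M : Matrix (Fin (2*n)) (Fin (2*n)) R}
    (hM : Mᵀ * psi n R * M = psi n R) {q : Fin (2*n)} (hq : ∀ p, M p q = (1 : Matrix _ _ R) p q)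
    (r : Fin (2*n)) : M (partner q) r = (1 : Matrix _ _ R) (partner q) r := by
  have h := congrFun (congrFun hM q) r
  simp only [Matrix.mul_assoc, Matrix.mul_apply (M := Mᵀ), Matrix.transpose_apply, hq,
    Matrix.one_apply, ite_mul, one_mul, zero_mul, Finset.sum_ite_eq', Finset.mem_univ,
    if_true, psi_mul_apply, psi_apply] at h
  rw [h, Matrix.one_apply]
  exact if_congr eq_comm rfl rfl

lemma one_add_transpose_mul_psi_mul_one_add {N : Matrix (Fin (2*n)) (Fin (2*n)) R}
    (hN : Nᵀ * psi n R = -(psi n R * N)) (hNN : N * N = 0) :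
    (1 + N)ᵀ * psi n R * (1 + N) = psi n R := by
  have hexpand : (1 + N)ᵀ * psi n R * (1 + N)
      = psi n R + (Nᵀ * psi n R + psi n R * N) + Nᵀ * psi n R * N := by
    rw [Matrix.transpose_add, Matrix.transpose_one]
    noncomm_ring
  rw [hexpand, hN, neg_add_cancel, Matrix.neg_mul, Matrix.mul_assoc, hNN]
  simp

end Psi

section BlockUnipotent

variable {n k : ℕ} {R : Type*} [CommRing R]

/-- In the basis `e₁, f₁, …, eₙ, fₙ`: the columns of `e₁, …, e_k`, the rows of `f₁, …, f_k`
and the block on `⟨e_{k+1}, …, fₙ⟩` are those of the identity. -/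
structure IsBlockUnipotent (k : ℕ) (M : Matrix (Fin (2*n)) (Fin (2*n)) R) : Prop where
  col_even : ∀ p q : Fin (2*n), q.val < 2*k → q.val % 2 = 0 → M p q = (1 : Matrix _ _ R) p q
  row_odd : ∀ p q : Fin (2*n), p.val < 2*k → p.val % 2 = 1 → M p q = (1 : Matrix _ _ R) p q
  corner : ∀ p q : Fin (2*n), 2*k ≤ p.val → 2*k ≤ q.val → M p q = (1 : Matrix _ _ R) p q

namespace IsBlockUnipotent

lemma one : IsBlockUnipotent k (1 : Matrix (Fin (2*n)) (Fin (2*n)) R) :=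
  ⟨fun _ _ _ _ => rfl, fun _ _ _ _ => rfl, fun _ _ _ _ => rfl⟩

/-- `A * B = A + B - 1 + (A - 1) * (B - 1)`, and only indices `t ≥ 2k` contribute to the last
term. -/
lemma mul_apply {A B : Matrix (Fin (2*n)) (Fin (2*n)) R} (hA : IsBlockUnipotent k A)
    (hB : IsBlockUnipotent k B) {p q : Fin (2*n)}
    (hside : ∀ t : Fin (2*n), 2*k ≤ t.val →
      A p t = (1 : Matrix _ _ R) p t ∨ B t q = (1 : Matrix _ _ R) t q) :
    (A * B) p q = A p q + B p q - (1 : Matrix _ _ R) p q := by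
  have hvanish :
      ∀ t, (A p t - (1 : Matrix _ _ R) p t) * (B t q - (1 : Matrix _ _ R) t q) = 0 := by
    intro t
    have : A p t = (1 : Matrix _ _ R) p t ∨ B t q = (1 : Matrix _ _ R) t q := by
      rcases lt_or_ge t.val (2*k) with ht | ht
      · rcases Nat.mod_two_eq_zero_or_one t.val with h | h
        · exact .inl (hA.col_even p t ht h)
        · exact .inr (hB.row_odd t q ht h)
      · exact hside t ht
    rcases this with h | h <;> simp [h]
  have hexpand : A * B = (A - 1) * (B - 1) + A + B - 1 := by noncomm_ring
  rw [hexpand]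
  simp [Matrix.mul_apply, hvanish]

lemma mul {A B : Matrix (Fin (2*n)) (Fin (2*n)) R} (hA : IsBlockUnipotent k A)
    (hB : IsBlockUnipotent k B) : IsBlockUnipotent k (A * B) where
  col_even p q hq hq' := by
    rw [hA.mul_apply hB fun t _ => .inr (hB.col_even t q hq hq'), hA.col_even p q hq hq',
      hB.col_even p q hq hq', add_sub_cancel_right]
  row_odd p q hp hp' := by
    rw [hA.mul_apply hB fun t _ => .inl (hA.row_odd p t hp hp'), hA.row_odd p q hp hp',
      hB.row_odd p q hp hp', add_sub_cancel_right]
  corner p q hp hq := by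
    rw [hA.mul_apply hB fun t ht => .inl (hA.corner p t hp ht), hA.corner p q hp hq,
      hB.corner p q hp hq, add_sub_cancel_right]

lemma psi_mul_transpose_mul_psi {M : Matrix (Fin (2*n)) (Fin (2*n)) R}
    (hM : IsBlockUnipotent k M) : IsBlockUnipotent k (psi n R * Mᵀ * psi n R) where
  col_even p q hq hq' := by
    rw [psi_mul_transpose_mul_psi_apply, ← one_apply_partner]
    exact hM.row_odd _ _ (by rw [partner_val_of_even hq']; omega)
      (by rw [partner_val_of_even hq']; omega)
  row_odd p q hp hp' := by
    rw [psi_mul_transpose_mul_psi_apply, ← one_apply_partner]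
    exact hM.col_even _ _ (by rw [partner_val_of_odd hp']; omega)
      (by rw [partner_val_of_odd hp']; omega)
  corner p q hp hq := by
    rw [psi_mul_transpose_mul_psi_apply, ← one_apply_partner]
    exact hM.corner _ _ (le_partner_val_iff.mpr hq) (le_partner_val_iff.mpr hp)

end IsBlockUnipotent

variable (n k R) in
/-- The group `L_k = ker ρ`, as a subgroup of `GL`. -/
def unipotentRadical : Subgroup (GL (Fin (2*n)) R) where
  carrier := {A | A ∈ Onn n R ∧ IsBlockUnipotent k A.val}
  one_mem' := ⟨(Onn n R).one_mem, IsBlockUnipotent.one⟩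
  mul_mem' ha hb := ⟨(Onn n R).mul_mem ha.1 hb.1, ha.2.mul hb.2⟩
  inv_mem' ha := ⟨(Onn n R).inv_mem ha.1, by
    rw [coe_inv_of_mem_Onn ha.1]
    exact ha.2.psi_mul_transpose_mul_psi⟩

lemma isBlockUnipotent_of_mem {A : GL (Fin (2*n)) R} (hA : A ∈ unipotentRadical n k R) :
    IsBlockUnipotent k A.val :=
  hA.2

end BlockUnipotent

section SkewSingle

variable {n k : ℕ} {R : Type*} [CommRing R]

def skewSingle (a b : Fin (2*n)) (r : R) : Matrix (Fin (2*n)) (Fin (2*n)) R :=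
  Matrix.single a b r - Matrix.single (partner b) (partner a) r

lemma skewSingle_transpose_mul_psi (a b : Fin (2*n)) (r : R) :
    (skewSingle a b r)ᵀ * psi n R = -(psi n R * skewSingle a b r) := by
  ext p q
  rw [mul_psi_apply, Matrix.transpose_apply, Matrix.neg_apply, psi_mul_apply]
  simp only [skewSingle, Matrix.sub_apply, Matrix.single_apply, partner_injective.eq_iff,
    eq_partner_iff]
  simp only [and_comm (a := partner a = q), and_comm (a := b = q)]
  ring

lemma skewSingle_mul_self {a b : Fin (2*n)} (hab : a ≠ b) (r : R) :
    skewSingle a b r * skewSingle a b r = 0 := by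
  simp [skewSingle, sub_mul, mul_sub, Matrix.single_mul_single_of_ne, hab.symm, partner_ne_self,
    (partner_ne_self _).symm, partner_injective.ne hab]

lemma skewSingle_apply_eq_zero {a b p q : Fin (2*n)} (r : R) (h₁ : ¬(a = p ∧ b = q))
    (h₂ : ¬(partner b = p ∧ partner a = q)) : skewSingle a b r p q = 0 := by
  rw [skewSingle, Matrix.sub_apply, Matrix.single_apply_of_ne _ _ _ _ _ h₁,
    Matrix.single_apply_of_ne _ _ _ _ _ h₂, sub_zero]

lemma one_add_skewSingle_apply {a b p q : Fin (2*n)} (r : R) (hpq : p ≠ q)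
    (h : ¬(partner b = p ∧ partner a = q)) :
    (1 + skewSingle a b r) p q = if a = p ∧ b = q then r else 0 := by
  rw [Matrix.add_apply, Matrix.one_apply_ne hpq, zero_add, skewSingle, Matrix.sub_apply,
    Matrix.single_apply_of_ne _ _ _ _ _ h, sub_zero, Matrix.single_apply]

lemma isBlockUnipotent_one_add_skewSingle {a b : Fin (2*n)} (r : R)
    (ha : ¬(a.val < 2*k ∧ a.val % 2 = 1)) (hb : ¬(b.val < 2*k ∧ b.val % 2 = 0))
    (hab : a.val < 2*k ∨ b.val < 2*k) : IsBlockUnipotent k (1 + skewSingle a b r) := by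
  constructor <;> intro p q hp hq <;> rw [Matrix.add_apply, skewSingle_apply_eq_zero, add_zero] <;>
    rintro ⟨rfl, rfl⟩ <;> (try simp only [partner_val] at *) <;> (try split_ifs at *) <;> omega

lemma exists_mem_unipotentRadical_val_eq {a b : Fin (2*n)} (r : R) (hne : a ≠ b)
    (ha : ¬(a.val < 2*k ∧ a.val % 2 = 1)) (hb : ¬(b.val < 2*k ∧ b.val % 2 = 0))
    (hab : a.val < 2*k ∨ b.val < 2*k) :
    ∃ A : unipotentRadical n k R, A.val.val = 1 + skewSingle a b r := by
  have hunit : IsUnit (1 + skewSingle a b r) :=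
    IsNilpotent.isUnit_one_add ⟨2, by rw [pow_two, skewSingle_mul_self hne]⟩
  refine ⟨⟨hunit.unit, ?_, ?_⟩, hunit.unit_spec⟩
  · show hunit.unit.valᵀ * psi n R * hunit.unit.val = psi n R
    rw [hunit.unit_spec]
    exact one_add_transpose_mul_psi_mul_one_add (skewSingle_transpose_mul_psi a b r)
      (skewSingle_mul_self hne r)
  · show IsBlockUnipotent k hunit.unit.val
    rw [hunit.unit_spec]
    exact isBlockUnipotent_one_add_skewSingle r ha hb hab

end SkewSingle



section XCoords

variable {n k : ℕ} {R : Type*} [CommRing R]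

/-- The paper's `(x₁, …, x_k)`. -/
def xCoords (hkn : k ≤ n) :
    unipotentRadical n k R →* Multiplicative (Fin k → Fin (2*(n-k)) → R) :=
  MonoidHom.mk'
    (fun A => ofAdd fun i j => A.val.val ⟨2*k + j.val, by omega⟩ ⟨2*i.val + 1, by omega⟩)
    fun A B => by
      rw [← ofAdd_add]
      congr 1
      ext i j
      have hA := isBlockUnipotent_of_mem A.2
      rw [Pi.add_apply, Pi.add_apply]
      refine (hA.mul_apply (isBlockUnipotent_of_mem B.2)
        fun t ht => .inl (hA.corner _ t (by simp) ht)).trans ?_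
      rw [Matrix.one_apply_ne (by simp [Fin.ext_iff]; omega), sub_zero]

variable {hkn : k ≤ n}

@[simp]
lemma toAdd_xCoords_apply (A : unipotentRadical n k R) (i : Fin k) (j : Fin (2*(n-k))) :
    toAdd (xCoords hkn A) i j = A.val.val ⟨2*k + j.val, by omega⟩ ⟨2*i.val + 1, by omega⟩ :=
  rfl

lemma apply_eq_zero_of_mem_ker_xCoords {A : unipotentRadical n k R} (hA : A ∈ (xCoords hkn).ker)
    {p q : Fin (2*n)} (hp : 2*k ≤ p.val) (hq : q.val < 2*k) (hq' : q.val % 2 = 1) :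
    A.val.val p q = 0 := by
  have h := congrFun (congrFun (congrArg toAdd (MonoidHom.mem_ker.mp hA)) ⟨q.val / 2, by omega⟩)
    ⟨p.val - 2*k, by omega⟩
  simp only [toAdd_xCoords_apply, toAdd_one, Pi.zero_apply] at h
  convert h using 2 <;> ext <;> simp <;> omega

lemma apply_eq_one_apply_of_mem_ker_xCoords_left {A : unipotentRadical n k R}
    (hA : A ∈ (xCoords hkn).ker) {t : Fin (2*n)} (ht : 2*k ≤ t.val) (q : Fin (2*n)) :
    A.val.val t q = (1 : Matrix _ _ R) t q := by
  have hU := isBlockUnipotent_of_mem A.2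
  rcases lt_or_ge q.val (2*k) with hq | hq
  · rcases Nat.mod_two_eq_zero_or_one q.val with hq' | hq'
    · exact hU.col_even t q hq hq'
    · rw [apply_eq_zero_of_mem_ker_xCoords hA ht hq hq',
        Matrix.one_apply_ne (by rintro rfl; omega)]
  · exact hU.corner t q ht hq

lemma apply_eq_one_apply_of_mem_ker_xCoords_right {A : unipotentRadical n k R}
    (hA : A ∈ (xCoords hkn).ker) {t : Fin (2*n)} (ht : 2*k ≤ t.val) (p : Fin (2*n)) :
    A.val.val p t = (1 : Matrix _ _ R) p t := by
  have h := apply_eq_one_apply_of_mem_ker_xCoords_left (inv_mem hA) (le_partner_val_iff.mpr ht)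
    (partner p)
  rwa [← psi_mul_transpose_mul_psi_apply (A⁻¹).val.val, one_apply_partner,
    ← coe_inv_of_mem_Onn (A⁻¹).2.1, Subgroup.coe_inv, inv_inv] at h

lemma ker_xCoords_le_center : (xCoords hkn).ker ≤ Subgroup.center (unipotentRadical n k R) := by
  intro A hA
  rw [Subgroup.mem_center_iff]
  intro g
  have hg := isBlockUnipotent_of_mem g.2
  have hU := isBlockUnipotent_of_mem A.2
  refine Subtype.ext <| Units.ext <| Matrix.ext fun p q => ?_
  show (g.val.val * A.val.val) p q = (A.val.val * g.val.val) p q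
  rw [hg.mul_apply hU fun t ht => .inr (apply_eq_one_apply_of_mem_ker_xCoords_left hA ht q),
    hU.mul_apply hg fun t ht => .inl (apply_eq_one_apply_of_mem_ker_xCoords_right hA ht p)]
  ring

lemma surjective_xCoords : Surjective (xCoords hkn : unipotentRadical n k R →* _) := by
  intro y
  rw [← MonoidHom.mem_range, ← ofAdd_toAdd y, ofAdd_eq_prod_prod_ofAdd_single]
  refine Subgroup.prod_mem _ fun i _ => Subgroup.prod_mem _ fun j _ => ?_
  obtain ⟨A, hA⟩ := exists_mem_unipotentRadical_val_eq (n := n) (k := k) (toAdd y i j)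
    (a := ⟨2*k + j.val, by omega⟩) (b := ⟨2*i.val + 1, by omega⟩)
    (by simp [Fin.ext_iff]; omega) (by simp) (by simp) (.inr (show 2 * i.val + 1 < 2 * k by omega))
  refine ⟨A, toAdd.injective ?_⟩
  funext i' j'
  rw [toAdd_xCoords_apply, hA, one_add_skewSingle_apply _ (by simp [Fin.ext_iff]; omega)
    (by simp only [Fin.ext_iff, partner_val]; split_ifs <;> omega), toAdd_ofAdd]
  rcases eq_or_ne i' i with rfl | hi
  · rcases eq_or_ne j' j with rfl | hj
    · simp
    · simp [hj, Fin.ext_iff, Fin.val_ne_of_ne hj.symm]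
  · simp [hi, Fin.ext_iff, Fin.val_ne_of_ne hi.symm]

end XCoords

section CCoords

variable {n k : ℕ} {R : Type*} [CommRing R]

/-- The paper's `cⱼⁱ`, `i < j`. -/
def cCoords (hkn : k ≤ n) :
    (xCoords hkn : unipotentRadical n k R →* _).ker →*
      Multiplicative ({p : Fin k × Fin k // p.1 < p.2} → R) :=
  MonoidHom.mk' (fun A => ofAdd fun p =>
      A.val.val.val ⟨2*p.val.1.val, by omega⟩ ⟨2*p.val.2.val + 1, by omega⟩)
    fun A B => by
      rw [← ofAdd_add]
      congr 1
      ext p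
      have hA := isBlockUnipotent_of_mem A.val.2
      rw [Pi.add_apply]
      refine (hA.mul_apply (isBlockUnipotent_of_mem B.val.2)
        fun t ht => .inr (apply_eq_one_apply_of_mem_ker_xCoords_left B.2 ht _)).trans ?_
      rw [Matrix.one_apply_ne (by simp [Fin.ext_iff]; omega), sub_zero]

variable {hkn : k ≤ n}

@[simp]
lemma toAdd_cCoords_apply (A : (xCoords hkn : unipotentRadical n k R →* _).ker)
    (p : {p : Fin k × Fin k // p.1 < p.2}) :
    toAdd (cCoords hkn A) p =
      A.val.val.val ⟨2*p.val.1.val, by omega⟩ ⟨2*p.val.2.val + 1, by omega⟩ :=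
  rfl

lemma apply_add_apply_partner_eq_zero {A : unipotentRadical n k R} (hA : A ∈ (xCoords hkn).ker)
    {p q : Fin (2*n)} (hp : p.val % 2 = 0) (hq : q.val % 2 = 1) :
    A.val.val p q + A.val.val (partner q) (partner p) = 0 := by
  have h := congrFun (congrFun (congrArg (fun B : unipotentRadical n k R => B.val.val)
    (mul_inv_cancel A)) p) q
  have hU := isBlockUnipotent_of_mem A.2
  rw [show (A * A⁻¹).val.val = A.val.val * A⁻¹.val.val from rfl,
    hU.mul_apply (isBlockUnipotent_of_mem A⁻¹.2)
      fun t ht => .inl (apply_eq_one_apply_of_mem_ker_xCoords_right hA ht p),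
    Subgroup.coe_inv, coe_inv_of_mem_Onn A.2.1, psi_mul_transpose_mul_psi_apply,
    show (1 : unipotentRadical n k R).val.val = 1 from rfl,
    Matrix.one_apply_ne (by rintro rfl; omega), sub_zero] at h
  exact h

lemma apply_eq_zero_of_cCoords_eq_one (h2 : IsUnit (2 : R))
    {A : (xCoords hkn : unipotentRadical n k R →* _).ker} (hA : cCoords hkn A = 1)
    {p q : Fin (2*n)} (hp : p.val < 2*k) (hp' : p.val % 2 = 0) (hq : q.val < 2*k)
    (hq' : q.val % 2 = 1) : A.val.val.val p q = 0 := by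
  have hupper : ∀ p q : Fin (2*n), p.val < 2*k → p.val % 2 = 0 → q.val < 2*k →
      q.val % 2 = 1 → p.val / 2 < q.val / 2 → A.val.val.val p q = 0 := by
    intro p q hp hp' hq hq' hlt
    have h :=
      congrFun (congrArg toAdd hA) ⟨(⟨p.val / 2, by omega⟩, ⟨q.val / 2, by omega⟩), hlt⟩
    rw [toAdd_cCoords_apply, toAdd_one, Pi.zero_apply] at h
    convert h using 2 <;> ext <;> simp <;> omega
  have hanti := apply_add_apply_partner_eq_zero A.2 hp' hq'
  have hq_val := partner_val_of_odd hq'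
  have hp_val := partner_val_of_even hp'
  rcases lt_trichotomy (p.val / 2) (q.val / 2) with hlt | heq | hgt
  · exact hupper p q hp hp' hq hq' hlt
  · obtain rfl : q = partner p := by ext; omega
    rw [partner_partner, ← two_mul] at hanti
    exact h2.mul_right_eq_zero.mp hanti
  · rw [eq_neg_of_add_eq_zero_left hanti, hupper _ _ (by omega) (by omega) (by omega) (by omega)
      (by omega), neg_zero]

lemma injective_cCoords (h2 : IsUnit (2 : R)) :
    Injective (cCoords hkn : (xCoords hkn : unipotentRadical n k R →* _).ker →* _) := by
  refine (injective_iff_map_eq_one _).mpr fun A hA => ?_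
  have hU := isBlockUnipotent_of_mem A.val.2
  refine Subtype.ext <| Subtype.ext <| Units.ext <| Matrix.ext fun p q => ?_
  show A.val.val.val p q = (1 : Matrix _ _ R) p q
  rcases lt_or_ge p.val (2*k) with hp | hp
  · rcases Nat.mod_two_eq_zero_or_one p.val with hp' | hp'
    · rcases lt_or_ge q.val (2*k) with hq | hq
      · rcases Nat.mod_two_eq_zero_or_one q.val with hq' | hq'
        · exact hU.col_even p q hq hq'
        · rw [apply_eq_zero_of_cCoords_eq_one h2 hA hp hp' hq hq',
            Matrix.one_apply_ne (by rintro rfl; omega)]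
      · exact apply_eq_one_apply_of_mem_ker_xCoords_right A.2 hq p
    · exact hU.row_odd p q hp hp'
  · exact apply_eq_one_apply_of_mem_ker_xCoords_left A.2 hp q

lemma surjective_cCoords :
    Surjective (cCoords hkn : (xCoords hkn : unipotentRadical n k R →* _).ker →* _) := by
  intro y
  rw [← MonoidHom.mem_range, ← ofAdd_toAdd y, ofAdd_eq_prod_ofAdd_single]
  refine Subgroup.prod_mem _ fun ij _ => ?_
  obtain ⟨⟨i, j⟩, hij : i < j⟩ := ij
  obtain ⟨A, hA⟩ :=
    exists_mem_unipotentRadical_val_eq (n := n) (k := k) (toAdd y ⟨(i, j), hij⟩)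
    (a := ⟨2*i.val, by omega⟩) (b := ⟨2*j.val + 1, by omega⟩)
    (by simp [Fin.ext_iff]; omega) (by simp) (by simp) (.inl (show 2 * i.val < 2 * k by omega))
  have hker : A ∈ (xCoords hkn).ker := by
    refine MonoidHom.mem_ker.mpr (toAdd.injective (funext fun i' => funext fun j' => ?_))
    rw [toAdd_xCoords_apply, hA, one_add_skewSingle_apply _ (by simp [Fin.ext_iff]; omega)
      (by simp only [Fin.ext_iff, partner_val]; split_ifs <;> omega),
      if_neg (by simp [Fin.ext_iff]; omega)]
    rfl
  refine ⟨⟨A, hker⟩, toAdd.injective (funext fun ij' => ?_)⟩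
  obtain ⟨⟨i', j'⟩, hij' : i' < j'⟩ := ij'
  rw [toAdd_cCoords_apply, hA, one_add_skewSingle_apply _ (by simp [Fin.ext_iff]; omega)
    (by simp only [Fin.ext_iff, partner_val]; split_ifs <;> omega), toAdd_ofAdd, Pi.single_apply]
  refine if_congr ?_ rfl rfl
  simp only [Fin.ext_iff, Subtype.ext_iff, Prod.ext_iff]
  omega

end CCoords

section Stabilizer

variable {n k : ℕ} {R : Type*} [CommRing R]

lemma mulVec_eVec_eq_self_iff {M : Matrix (Fin (2*n)) (Fin (2*n)) R} {i : Fin n} :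
    M *ᵥ eVec n R i = eVec n R i ↔
      ∀ p, M p ⟨2*i.val, by omega⟩ =
        (1 : Matrix (Fin (2*n)) (Fin (2*n)) R) p ⟨2*i.val, by omega⟩ := by
  simp only [eVec, Matrix.mulVec_single_one, funext_iff, Matrix.col_apply, Matrix.one_apply,
    Pi.single_apply]

lemma one_apply_add_two_mul (i j : Fin (2*(n-k))) :
    (1 : Matrix (Fin (2*(n-k))) (Fin (2*(n-k))) R) i j =
      (1 : Matrix (Fin (2*n)) (Fin (2*n)) R)
        ⟨2*k + i.val, by omega⟩ ⟨2*k + j.val, by omega⟩ := by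
  simp [Matrix.one_apply, Fin.ext_iff]

lemma range_ker_eq_unipotentRadical (hkn : k ≤ n) (Tk : Subgroup (GL (Fin (2*n)) R))
    (hTk : Tk = Onn n R ⊓ stabOf n R
      {w | ∃ i : Fin k, w = eVec n R ⟨i.val, by omega⟩})
    (ρ : ↥Tk →* ↥(Onn (n-k) R))
    (hρ : ∀ (A : ↥Tk) (i j : Fin (2*(n-k))),
      ((↑(ρ A) : GL (Fin (2*(n-k))) R) : Matrix (Fin (2*(n-k))) (Fin (2*(n-k))) R) i j =
        ((↑A : GL (Fin (2*n)) R) : Matrix (Fin (2*n)) (Fin (2*n)) R)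
          ⟨2*k + i.val, by omega⟩
          ⟨2*k + j.val, by omega⟩) :
    (Tk.subtype.comp ρ.ker.subtype).range = unipotentRadical n k R := by
  subst hTk
  ext g
  constructor
  · rintro ⟨A, rfl⟩
    have hO : A.val.val ∈ Onn n R := A.val.2.1
    have hcol : ∀ p q : Fin (2*n), q.val < 2*k → q.val % 2 = 0 →
        A.val.val.val p q = (1 : Matrix _ _ R) p q := fun p q hq hq' => by
      have h := mulVec_eVec_eq_self_iff.mp (A.val.2.2 _ ⟨⟨q.val / 2, by omega⟩, rfl⟩) p
      convert h using 2 <;> ext <;> simp <;> omega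
    refine ⟨hO, hcol, fun p q hp hp' => ?_, fun p q hp hq => ?_⟩
    · rw [← partner_partner p]
      exact apply_partner_eq_one_apply hO (hcol · _ (by rw [partner_val_of_odd hp']; omega)
        (by rw [partner_val_of_odd hp']; omega)) q
    · have h := hρ A.val ⟨p.val - 2*k, by omega⟩ ⟨q.val - 2*k, by omega⟩
      rw [MonoidHom.mem_ker.mp A.2, OneMemClass.coe_one, Units.val_one, one_apply_add_two_mul] at h
      convert h.symm using 2 <;> ext <;> simp <;> omega
  · rintro ⟨hO, hU⟩
    have hstab : g ∈ stabOf n R {w | ∃ i : Fin k, w = eVec n R ⟨i.val, by omega⟩} := by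
      rintro v ⟨i, rfl⟩
      exact mulVec_eVec_eq_self_iff.mpr fun p => hU.col_even p _ (by simp) (by simp)
    refine ⟨⟨⟨g, Subgroup.mem_inf.mpr ⟨hO, hstab⟩⟩, MonoidHom.mem_ker.mpr ?_⟩, rfl⟩
    refine Subtype.ext <| Units.ext <| Matrix.ext fun i j => ?_
    rw [hρ, OneMemClass.coe_one, Units.val_one, one_apply_add_two_mul]
    exact hU.corner _ _ (by simp) (by simp)

end Stabilizer

theorem statement_19 (n k : ℕ) (R : Type*) [CommRing R]
    (h2 : IsUnit (2 : R)) (hkn : k ≤ n)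
    (Tk : Subgroup (GL (Fin (2*n)) R))
    (hTk : Tk = Onn n R ⊓ stabOf n R
      {w | ∃ i : Fin k, w = eVec n R ⟨i.val, by have := i.isLt; omega⟩})
    (ρ : ↥Tk →* ↥(Onn (n-k) R))
    (hρ : ∀ (A : ↥Tk) (i j : Fin (2*(n-k))),
      ((↑(ρ A) : GL (Fin (2*(n-k))) R) : Matrix (Fin (2*(n-k))) (Fin (2*(n-k))) R) i j =
        ((↑A : GL (Fin (2*n)) R) : Matrix (Fin (2*n)) (Fin (2*n)) R)
          ⟨2*k + i.val, by have := i.isLt; omega⟩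
          ⟨2*k + j.val, by have := j.isLt; omega⟩) :
    ∃ π : ↥ρ.ker →* Multiplicative (Fin k → Fin (2*(n-k)) → R),
      (∀ (A : ↥ρ.ker) (i : Fin k) (j : Fin (2*(n-k))),
        Multiplicative.toAdd (π A) i j =
          ((↑(↑A : ↥Tk) : GL (Fin (2*n)) R) : Matrix (Fin (2*n)) (Fin (2*n)) R)
            ⟨2*k + j.val, by have := j.isLt; omega⟩
            ⟨2*i.val + 1, by have := i.isLt; omega⟩) ∧
      Function.Surjective π ∧
      π.ker ≤ Subgroup.center ↥ρ.ker ∧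
      ∃ iso : ↥π.ker ≃* Multiplicative ({p : Fin k × Fin k // p.1 < p.2} → R),
        ∀ (A : ↥π.ker) (p : {p : Fin k × Fin k // p.1 < p.2}),
          Multiplicative.toAdd (iso A) p =
            ((↑(↑(↑A : ↥ρ.ker) : ↥Tk) : GL (Fin (2*n)) R) : Matrix (Fin (2*n)) (Fin (2*n)) R)
              ⟨2*p.val.1.val, by have := p.val.1.isLt; omega⟩
              ⟨2*p.val.2.val + 1, by have := p.val.2.isLt; omega⟩ := by
  let e : ρ.ker ≃* unipotentRadical n k R :=
    (MonoidHom.ofInjective (f := Tk.subtype.comp ρ.ker.subtype)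
      (Tk.subtype_injective.comp ρ.ker.subtype_injective)).trans
      (MulEquiv.subgroupCongr (range_ker_eq_unipotentRadical hkn Tk hTk ρ hρ))
  let π := (xCoords hkn).comp e.toMonoidHom
  have hker : π.ker.map e.toMonoidHom = (xCoords hkn).ker := by
    rw [← MonoidHom.comap_ker, Subgroup.map_comap_eq_self_of_surjective e.surjective]
  refine ⟨π, fun A i j => rfl, (surjective_xCoords (hkn := hkn)).comp e.surjective, fun A hA => ?_,
    (e.subgroupMap π.ker).trans <| (MulEquiv.subgroupCongr hker).trans <|
      MulEquiv.ofBijective (cCoords hkn) ⟨injective_cCoords h2, surjective_cCoords⟩,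
    fun A p => rfl⟩
  have hcentral := Subgroup.mem_center_iff.mp (ker_xCoords_le_center (hkn := hkn) hA)
  exact Subgroup.mem_center_iff.mpr fun g => e.injective (by rw [map_mul, map_mul]; exact hcentral (e g))
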